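/- Define B_α on basis {y_β : β ∈ Γ} by (t^β D^μ)·y_γ = (−1)^{|μ|+1}(α+β+γ)^μ y_{β+γ} for μ ∈ ℤ≥0^n \ {0}. Then B_α is a representation of the Lie algebra W(Γ,n)^{(1)}, i.e., the bracket relation holds on all basis vectors. -/
import Mathlib

lemma neg_one_pow_sub {F : Type*} [Field F] {k m : ℕ} (h : k ≤ m) :
    ((-1 : F)) ^ (m - k) = (-1) ^ m * (-1) ^ k := by
  have h2 : (-1 : F) ^ (m - k) * (-1) ^ k = (-1) ^ m := by
    rw [← pow_add, Nat.sub_add_cancel h]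
  calc (-1 : F) ^ (m - k) = (-1) ^ (m - k) * ((-1) ^ k * (-1) ^ k) := by
        rw [← pow_add, ← two_mul, pow_mul]; simp
    _ = (-1) ^ m * (-1) ^ k := by rw [← mul_assoc, h2]

lemma coordL {F : Type*} [Field F] (m v : ℕ) (b x : F) :
    ∑ k ∈ Finset.Icc 0 m, ((m.choose k : F) * b ^ k *
      ((-1:F) ^ ((m - k) + v) * x ^ ((m - k) + v)))
    = (-1:F) ^ (m + v) * x ^ v * (x - b) ^ m := by
  have h : Finset.Icc 0 m = Finset.range (m + 1) := by
    rw [Finset.range_eq_Ico, Finset.Ico_add_one_right_eq_Icc]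
  rw [h]
  rw [show ((x - b) ^ m : F) = (-b + x) ^ m by ring, add_pow, Finset.mul_sum]
  refine Finset.sum_congr rfl fun k hk => ?_
  have hk' : k ≤ m := Nat.lt_succ_iff.mp (Finset.mem_range.mp hk)
  rw [pow_add, pow_add, neg_one_pow_sub hk', pow_add, neg_pow b k]
  ring

lemma key {F : Type*} [Field F] {n : ℕ} (μ ν : Fin n → ℕ) (b x : Fin n → F) :
    ∑ lam ∈ Finset.Icc 0 μ, (((∏ i, (μ i).choose (lam i) : ℕ) : F) * (∏ i, b i ^ lam i) *
      ((-1:F) ^ ((∑ i, (μ + ν - lam) i) + 1) * ∏ i, x i ^ ((μ + ν - lam) i)))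
    = (-1:F) ^ ((∑ i, μ i) + (∑ i, ν i) + 1) * (∏ i, x i ^ ν i) *
        ∏ i, (x i - b i) ^ μ i := by
  have hterm : ∀ lam ∈ Finset.Icc 0 μ,
      (((∏ i, (μ i).choose (lam i) : ℕ) : F) * (∏ i, b i ^ lam i) *
        ((-1:F) ^ ((∑ i, (μ + ν - lam) i) + 1) * ∏ i, x i ^ ((μ + ν - lam) i)))
      = (-1:F) * ∏ i, (((μ i).choose (lam i) : F) * b i ^ lam i *
          ((-1:F) ^ ((μ i - lam i) + ν i) * x i ^ ((μ i - lam i) + ν i))) := by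
    intro lam hlam
    rw [Finset.mem_Icc] at hlam
    have h1 : (μ + ν - lam) = fun i => (μ i - lam i) + ν i := by
      funext i
      have hli : lam i ≤ μ i := hlam.2 i
      simp only [Pi.sub_apply, Pi.add_apply]
      omega
    rw [h1, pow_succ, ← Finset.prod_pow_eq_pow_sum, Nat.cast_prod]
    simp only [Finset.prod_mul_distrib]
    ring
  rw [Finset.sum_congr rfl hterm, ← Finset.mul_sum, Pi.Icc_eq]
  simp only [Pi.zero_apply]
  rw [
    ← Finset.prod_univ_sum (fun i => Finset.Icc (0 : ℕ) (μ i))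
      (fun i k => ((μ i).choose k : F) * b i ^ k *
        ((-1:F) ^ ((μ i - k) + ν i) * x i ^ ((μ i - k) + ν i)))]
  rw [Finset.prod_congr rfl fun i _ => coordL (μ i) (ν i) (b i) (x i)]
  simp only [Finset.prod_mul_distrib, Finset.prod_pow_eq_pow_sum, ← Finset.sum_add_distrib,
    pow_succ]
  ring

lemma key' {F : Type*} [Field F] {n : ℕ} (μ ν : Fin n → ℕ) (b x y : Fin n → F)
    (h : ∀ i, x i - b i = y i) :
    ∑ lam ∈ Finset.Icc 0 μ, (((∏ i, (μ i).choose (lam i) : ℕ) : F) * (∏ i, b i ^ lam i) *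
      ((-1:F) ^ ((∑ i, (μ + ν - lam) i) + 1) * ∏ i, x i ^ ((μ + ν - lam) i)))
    = (-1:F) ^ ((∑ i, μ i) + (∑ i, ν i) + 1) * (∏ i, x i ^ ν i) *
        ∏ i, (y i) ^ μ i := by
  rw [key]
  congr 1
  exact Finset.prod_congr rfl fun i _ => by rw [h i]


/- The module B_α over W(Γ,n)^{(1)}: it has basis {y_β : β ∈ Γ}, modelled as Γ →₀ F. -/

noncomputable section

variable (F : Type*) [Field F] [CharZero F] (n : ℕ) (Γ : AddSubgroup (Fin n → F))

/-- The action of `t^β D^μ` on `B_α`: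
`(t^β D^μ) y_γ = (−1)^{|μ|+1} (α+β+γ)^μ y_{β+γ}`. -/
def actB (α : Fin n → F) (β : Γ) (μ : Fin n → ℕ) : Module.End F (Γ →₀ F) :=
  Finsupp.lsum F fun γ =>
    ((-1 : F) ^ ((∑ i, μ i) + 1) *
      ∏ i, (α i + (β : Fin n → F) i + (γ : Fin n → F) i) ^ μ i) •
      Finsupp.lsingle (β + γ)

omit [CharZero F] in
lemma actB_single (α : Fin n → F) (β : Γ) (μ : Fin n → ℕ) (γ : Γ) (a : F) :
    actB F n Γ α β μ (Finsupp.single γ a) =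
    Finsupp.single (β + γ) (((-1 : F) ^ ((∑ i, μ i) + 1) *
      ∏ i, (α i + (β : Fin n → F) i + (γ : Fin n → F) i) ^ μ i) * a) := by
  simp [actB, Finsupp.smul_single, mul_comm]


/-- `B_α` is a representation of `W(Γ,n)^{(1)}`: the action of the bracket
`[t^β D^μ, t^{β'} D^ν] = Σ_λ C(μ,λ) β'^λ t^{β+β'} D^{μ+ν−λ}
  − Σ_λ C(ν,λ) β^λ t^{β+β'} D^{ν+μ−λ}`
coincides with the commutator of the actions, for `μ, ν ≠ 0`. -/
theorem actB_is_representation (α : Fin n → F) (β β' : Γ) (μ ν : Fin n → ℕ)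
    (hμ : μ ≠ 0) (hν : ν ≠ 0) :
    (∑ lam ∈ Finset.Icc 0 μ,
        ((∏ i, (μ i).choose (lam i) : ℕ) : F) •
          (∏ i, ((β' : Fin n → F) i) ^ lam i) • actB F n Γ α (β + β') (μ + ν - lam))
      - (∑ lam ∈ Finset.Icc 0 ν,
          ((∏ i, (ν i).choose (lam i) : ℕ) : F) •
            (∏ i, ((β : Fin n → F) i) ^ lam i) • actB F n Γ α (β' + β) (ν + μ - lam))
    = actB F n Γ α β μ * actB F n Γ α β' ν - actB F n Γ α β' ν * actB F n Γ α β μ := by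
  refine Finsupp.lhom_ext fun γ c => ?_
  simp only [LinearMap.sub_apply, LinearMap.sum_apply, LinearMap.smul_apply,
    Module.End.mul_apply, actB_single, Finsupp.smul_single]
  simp only [AddSubgroup.coe_add, Pi.add_apply, smul_eq_mul]
  rw [show β' + β + γ = β + β' + γ by rw [add_comm β' β],
    show β + (β' + γ) = β + β' + γ from (add_assoc β β' γ).symm,
    show β' + (β + γ) = β + β' + γ by rw [← add_assoc, add_comm β' β],
    ← Finsupp.single_finset_sum, ← Finsupp.single_finset_sum,
    ← Finsupp.single_sub, ← Finsupp.single_sub]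
  congr 1
  have hA : ∑ lam ∈ Finset.Icc 0 μ,
      (((∏ i, (μ i).choose (lam i) : ℕ) : F) *
        ((∏ i, ((β' : Fin n → F) i) ^ lam i) *
          (((-1:F) ^ ((∑ i, (μ + ν - lam) i) + 1) *
            ∏ i, (α i + ((β : Fin n → F) i + (β' : Fin n → F) i) + (γ : Fin n → F) i)
              ^ ((μ + ν - lam) i)) * c)))
      = (∑ lam ∈ Finset.Icc 0 μ, (((∏ i, (μ i).choose (lam i) : ℕ) : F) *
          (∏ i, ((β' : Fin n → F) i) ^ lam i) *
          ((-1:F) ^ ((∑ i, (μ + ν - lam) i) + 1) *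
            ∏ i, (α i + (β : Fin n → F) i + (β' : Fin n → F) i + (γ : Fin n → F) i)
              ^ ((μ + ν - lam) i)))) * c := by
    rw [Finset.sum_mul]
    refine Finset.sum_congr rfl fun lam _ => ?_
    rw [show (∏ i, (α i + ((β : Fin n → F) i + (β' : Fin n → F) i) + (γ : Fin n → F) i)
          ^ ((μ + ν - lam) i))
        = ∏ i, (α i + (β : Fin n → F) i + (β' : Fin n → F) i + (γ : Fin n → F) i)
          ^ ((μ + ν - lam) i) from Finset.prod_congr rfl fun i _ => by ring]
    ring
  have hB : ∑ lam ∈ Finset.Icc 0 ν,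
      (((∏ i, (ν i).choose (lam i) : ℕ) : F) *
        ((∏ i, ((β : Fin n → F) i) ^ lam i) *
          (((-1:F) ^ ((∑ i, (ν + μ - lam) i) + 1) *
            ∏ i, (α i + ((β' : Fin n → F) i + (β : Fin n → F) i) + (γ : Fin n → F) i)
              ^ ((ν + μ - lam) i)) * c)))
      = (∑ lam ∈ Finset.Icc 0 ν, (((∏ i, (ν i).choose (lam i) : ℕ) : F) *
          (∏ i, ((β : Fin n → F) i) ^ lam i) *
          ((-1:F) ^ ((∑ i, (ν + μ - lam) i) + 1) *
            ∏ i, (α i + (β : Fin n → F) i + (β' : Fin n → F) i + (γ : Fin n → F) i)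
              ^ ((ν + μ - lam) i)))) * c := by
    rw [Finset.sum_mul]
    refine Finset.sum_congr rfl fun lam _ => ?_
    rw [show (∏ i, (α i + ((β' : Fin n → F) i + (β : Fin n → F) i) + (γ : Fin n → F) i)
          ^ ((ν + μ - lam) i))
        = ∏ i, (α i + (β : Fin n → F) i + (β' : Fin n → F) i + (γ : Fin n → F) i)
          ^ ((ν + μ - lam) i) from Finset.prod_congr rfl fun i _ => by ring]
    ring
  rw [hA, hB,
    key' μ ν (fun i => (β' : Fin n → F) i)
      (fun i => α i + (β : Fin n → F) i + (β' : Fin n → F) i + (γ : Fin n → F) i)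
      (fun i => α i + (β : Fin n → F) i + (γ : Fin n → F) i) (fun i => by ring),
    key' ν μ (fun i => (β : Fin n → F) i)
      (fun i => α i + (β : Fin n → F) i + (β' : Fin n → F) i + (γ : Fin n → F) i)
      (fun i => α i + (β' : Fin n → F) i + (γ : Fin n → F) i) (fun i => by ring),
    show (∏ i, (α i + (β : Fin n → F) i + ((β' : Fin n → F) i + (γ : Fin n → F) i)) ^ μ i)
      = ∏ i, (α i + (β : Fin n → F) i + (β' : Fin n → F) i + (γ : Fin n → F) i) ^ μ i
      from Finset.prod_congr rfl fun i _ => by ring,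
    show (∏ i, (α i + (β' : Fin n → F) i + ((β : Fin n → F) i + (γ : Fin n → F) i)) ^ ν i)
      = ∏ i, (α i + (β : Fin n → F) i + (β' : Fin n → F) i + (γ : Fin n → F) i) ^ ν i
      from Finset.prod_congr rfl fun i _ => by ring]
  ring
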